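/- Let p, q ∈ ℝ. The linear map N_{p,q} = (1−p−q)Φ₀ + pΦ₂ + qΦ₄ is positive if and only if (q ≥ 0 and 0 ≤ 5p+3q ≤ 5 and 5p+9q ≤ 10), and N_{p,q} is decomposable if and only if the same conditions hold. -/

import Mathlib

open Matrix BigOperators
open scoped Kronecker ComplexOrder

noncomputable section


/-- `Φ^{2→2}_2`. -/
def Phi2 (A : Matrix (Fin 3) (Fin 3) ℂ) : Matrix (Fin 3) (Fin 3) ℂ :=
  (1 / 2 : ℂ) •
    !![A 0 0 + A 1 1, A 1 2, -(A 0 2);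
       A 2 1, A 0 0 + A 2 2, A 0 1;
       -(A 2 0), A 1 0, A 1 1 + A 2 2]

/-- `Φ^{2→2}_4`. -/
def Phi4 (A : Matrix (Fin 3) (Fin 3) ℂ) : Matrix (Fin 3) (Fin 3) ℂ :=
  (1 / 10 : ℂ) •
    !![A 0 0 + 3 * A 1 1 + 6 * A 2 2, -2 * A 0 1 - 3 * A 1 2, A 0 2;
       -2 * A 1 0 - 3 * A 2 1, 3 * A 0 0 + 4 * A 1 1 + 3 * A 2 2, -3 * A 0 1 - 2 * A 1 2;
       A 2 0, -3 * A 1 0 - 2 * A 2 1, 6 * A 0 0 + 3 * A 1 1 + A 2 2]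

/-- `N_{p,q} = (1-p-q)Φ₀ + pΦ₂ + qΦ₄` (with `Φ₀ = id`). -/
def Nmap (p q : ℝ) (A : Matrix (Fin 3) (Fin 3) ℂ) : Matrix (Fin 3) (Fin 3) ℂ :=
  ((1 - p - q : ℝ) : ℂ) • A + ((p : ℝ) : ℂ) • Phi2 A + ((q : ℝ) : ℂ) • Phi4 A

/-- The Choi matrix `C_Θ = ∑_{i,j} E_{ij} ⊗ Θ(E_{ij})`. -/
def choi {k n : ℕ} (Θ : Matrix (Fin k) (Fin k) ℂ → Matrix (Fin n) (Fin n) ℂ) :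
    Matrix (Fin k × Fin n) (Fin k × Fin n) ℂ :=
  fun x y => Θ (Matrix.single x.1 y.1 1) x.2 y.2

/-- The partial transpose `(id ⊗ transpose)(C_Θ)` of the Choi matrix. -/
def choiPT {k n : ℕ} (Θ : Matrix (Fin k) (Fin k) ℂ → Matrix (Fin n) (Fin n) ℂ) :
    Matrix (Fin k × Fin n) (Fin k × Fin n) ℂ :=
  fun x y => Θ (Matrix.single x.1 y.1 1) y.2 x.2

/-- `Θ` is PPT if the partial transpose of its Choi matrix is positive semidefinite. -/
def IsPPT {k n : ℕ} (Θ : Matrix (Fin k) (Fin k) ℂ → Matrix (Fin n) (Fin n) ℂ) : Prop :=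
  (choiPT Θ).PosSemidef

/-- `Θ` is entanglement-breaking if its Choi matrix is separable. -/
def IsEBT {k n : ℕ} (Θ : Matrix (Fin k) (Fin k) ℂ → Matrix (Fin n) (Fin n) ℂ) : Prop :=
  ∃ (N : ℕ) (A : Fin N → Matrix (Fin k) (Fin k) ℂ) (B : Fin N → Matrix (Fin n) (Fin n) ℂ),
    (∀ t, (A t).PosSemidef) ∧ (∀ t, (B t).PosSemidef) ∧ choi Θ = ∑ t, A t ⊗ₖ B t

/-- `Θ` is completely positive if its Choi matrix is positive semidefinite. -/
def IsCP {k n : ℕ} (Θ : Matrix (Fin k) (Fin k) ℂ → Matrix (Fin n) (Fin n) ℂ) : Prop :=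
  (choi Θ).PosSemidef

/-- `Θ` is trace-preserving. -/
def IsTP {k n : ℕ} (Θ : Matrix (Fin k) (Fin k) ℂ → Matrix (Fin n) (Fin n) ℂ) : Prop :=
  ∀ X, (Θ X).trace = X.trace

/-- `Θ` is a positive map: it sends positive semidefinite matrices to positive
semidefinite matrices. -/
def IsPosMap {k n : ℕ} (Θ : Matrix (Fin k) (Fin k) ℂ → Matrix (Fin n) (Fin n) ℂ) : Prop :=
  ∀ X, X.PosSemidef → (Θ X).PosSemidef

/-- `Θ` is completely co-positive if `X ↦ Θ(Xᵗ)` is completely positive. -/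
def IsCoCP {k n : ℕ} (Θ : Matrix (Fin k) (Fin k) ℂ → Matrix (Fin n) (Fin n) ℂ) : Prop :=
  IsCP (fun X => Θ Xᵀ)

/-- `Θ` is decomposable if it is the sum of a completely positive linear map and a
completely co-positive linear map. -/
def IsDecomposable {k n : ℕ}
    (Θ : Matrix (Fin k) (Fin k) ℂ → Matrix (Fin n) (Fin n) ℂ) : Prop :=
  ∃ (Θ₁ Θ₂ : Matrix (Fin k) (Fin k) ℂ →ₗ[ℂ] Matrix (Fin n) (Fin n) ℂ),
    IsCP (⇑Θ₁) ∧ IsCoCP (⇑Θ₂) ∧ ∀ X, Θ X = Θ₁ X + Θ₂ X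


/-! ### Auxiliary machinery -/

section Aux

/-- Rank-one "outer product" matrix `v vᴴ`. -/
def outerC {m : Type*} (v : m → ℂ) : Matrix m m ℂ := fun x y => v x * star (v y)

lemma outerC_posSemidef {m : Type*} [Fintype m] (v : m → ℂ) : (outerC v).PosSemidef := by
  have h : outerC v = (Matrix.of fun (_ : Fin 1) x => star (v x))ᴴ *
      (Matrix.of fun (_ : Fin 1) x => star (v x)) := by
    ext x y
    simp [outerC, Matrix.mul_apply, Matrix.conjTranspose_apply]
  rw [h]; exact Matrix.posSemidef_conjTranspose_mul_self _

lemma posSemidef_ofReal_smul {m : Type*} [Fintype m] {c : ℝ} (hc : 0 ≤ c)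
    {M : Matrix m m ℂ} (hM : M.PosSemidef) : ((c : ℂ) • M).PosSemidef := by
  rw [Matrix.posSemidef_iff_dotProduct_mulVec]
  constructor
  · unfold Matrix.IsHermitian
    rw [Matrix.conjTranspose_smul, hM.1]
    norm_num
  · intro x
    rw [Matrix.smul_mulVec, dotProduct_smul, smul_eq_mul]
    exact mul_nonneg (by exact_mod_cast hc) (hM.dotProduct_mulVec_nonneg x)

/-- The linear map associated with a Choi matrix. -/
def thetaM {k n : ℕ} (M : Matrix (Fin k × Fin n) (Fin k × Fin n) ℂ) :
    Matrix (Fin k) (Fin k) ℂ →ₗ[ℂ] Matrix (Fin n) (Fin n) ℂ where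
  toFun A := Matrix.of fun a b => ∑ i, ∑ j, A i j * M (i, a) (j, b)
  map_add' A B := by
    ext a b
    simp [add_mul, Finset.sum_add_distrib]
  map_smul' c A := by
    ext a b
    simp [smul_eq_mul, mul_assoc, Finset.mul_sum]

lemma choi_thetaM {k n : ℕ} (M : Matrix (Fin k × Fin n) (Fin k × Fin n) ℂ) :
    choi (⇑(thetaM M)) = M := by
  ext x y
  show (∑ i, ∑ j, Matrix.single x.1 y.1 1 i j * M (i, x.2) (j, y.2)) = M x y
  rw [Finset.sum_eq_single x.1]
  · rw [Finset.sum_eq_single y.1]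
    · simp [Matrix.single]
    · intro j _ hj
      simp [Matrix.single, hj.symm]
    · simp
  · intro i _ hi
    apply Finset.sum_eq_zero
    intro j _
    simp [Matrix.single, hi.symm]
  · simp

/-- Pre-composition with the transpose, as a linear map. -/
def transLM {k n : ℕ} (Θ : Matrix (Fin k) (Fin k) ℂ →ₗ[ℂ] Matrix (Fin n) (Fin n) ℂ) :
    Matrix (Fin k) (Fin k) ℂ →ₗ[ℂ] Matrix (Fin n) (Fin n) ℂ where
  toFun X := Θ Xᵀ
  map_add' X Y := by simp [Matrix.transpose_add]
  map_smul' c X := by simp [Matrix.transpose_smul]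

lemma thetaOuter_eq {k n : ℕ} (Θ : Matrix (Fin k) (Fin k) ℂ →ₗ[ℂ] Matrix (Fin n) (Fin n) ℂ)
    (v : Fin k → ℂ) :
    Θ (outerC v) =
      (Matrix.of fun (a : Fin n) (p : Fin k × Fin n) => v p.1 * (if p.2 = a then 1 else 0)) *
        choi ⇑Θ *
      (Matrix.of fun (a : Fin n) (p : Fin k × Fin n) => v p.1 * (if p.2 = a then 1 else 0))ᴴ := by
  have hexp : outerC v = ∑ i, ∑ j, (v i * star (v j)) • Matrix.single i j (1 : ℂ) := by
    ext a b
    simp [outerC, Matrix.sum_apply, Matrix.single, ite_and, mul_ite, mul_one, mul_zero,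
      Finset.sum_ite_eq, Finset.sum_ite_eq']
  rw [hexp, map_sum]
  ext a b
  simp only [map_sum, _root_.map_smul, Matrix.sum_apply, Matrix.smul_apply, smul_eq_mul,
    Matrix.mul_apply, Matrix.conjTranspose_apply, Matrix.of_apply, Fintype.sum_prod_type,
    choi, apply_ite (star : ℂ → ℂ), star_one, star_zero,
    mul_ite, ite_mul, zero_mul, mul_zero, mul_one, Finset.sum_ite_eq, Finset.sum_ite_eq',
    Finset.mem_univ, if_true, Finset.sum_mul, Finset.mul_sum]
  rw [Finset.sum_comm]
  refine Finset.sum_congr rfl fun i _ => Finset.sum_congr rfl fun j _ => ?_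
  ring

lemma posSemidef_sum' {m ι : Type*} [Fintype m] (s : Finset ι) (f : ι → Matrix m m ℂ)
    (h : ∀ i ∈ s, (f i).PosSemidef) : (∑ i ∈ s, f i).PosSemidef :=
  Finset.sum_induction f _ (fun _ _ ha hb => ha.add hb) Matrix.PosSemidef.zero h

/-- A linear map with positive semidefinite Choi matrix is a positive map. -/
lemma isPosMap_of_cp {k n : ℕ} (Θ : Matrix (Fin k) (Fin k) ℂ →ₗ[ℂ] Matrix (Fin n) (Fin n) ℂ)
    (h : (choi ⇑Θ).PosSemidef) : IsPosMap ⇑Θ := by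
  intro X hX
  obtain ⟨B, rfl⟩ : ∃ B : Matrix (Fin k) (Fin k) ℂ, X = Bᴴ * B := by
    open scoped MatrixOrder in exact CStarAlgebra.nonneg_iff_eq_star_mul_self.mp hX.nonneg
  have hdec : Bᴴ * B = ∑ r : Fin k, outerC (fun i => star (B r i)) := by
    ext i j
    simp [Matrix.mul_apply, outerC, Matrix.sum_apply, Matrix.conjTranspose_apply]
  rw [hdec, map_sum]
  refine posSemidef_sum' _ _ fun r _ => ?_
  rw [thetaOuter_eq]
  exact h.mul_mul_conjTranspose_same _

/-- A decomposable map is positive. -/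
lemma isPosMap_of_decomposable {k n : ℕ}
    (Θ : Matrix (Fin k) (Fin k) ℂ → Matrix (Fin n) (Fin n) ℂ)
    (h : IsDecomposable Θ) : IsPosMap Θ := by
  obtain ⟨Θ₁, Θ₂, h1, h2, hsum⟩ := h
  intro X hX
  rw [hsum X]
  refine Matrix.PosSemidef.add (isPosMap_of_cp Θ₁ h1 X hX) ?_
  have hrw : Θ₂ X = (transLM Θ₂) Xᵀ := by
    simp [transLM, Matrix.transpose_transpose]
  rw [hrw]
  exact isPosMap_of_cp (transLM Θ₂) h2 Xᵀ hX.transpose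

/-- View a `3 × 3` matrix as a vector indexed by `Fin 3 × Fin 3`. -/
def vb (M : Matrix (Fin 3) (Fin 3) ℂ) : Fin 3 × Fin 3 → ℂ := fun x => M x.1 x.2

def MU : Matrix (Fin 3) (Fin 3) ℂ := !![1,0,0;0,1,0;0,0,1]
def MW1 : Matrix (Fin 3) (Fin 3) ℂ := !![1,0,0;0,0,0;0,0,-1]
def MW2 : Matrix (Fin 3) (Fin 3) ℂ := !![0,1,0;0,0,1;0,0,0]
def MW3 : Matrix (Fin 3) (Fin 3) ℂ := !![0,0,0;1,0,0;0,1,0]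
def MX1 : Matrix (Fin 3) (Fin 3) ℂ := !![0,1,0;-1,0,0;0,0,0]
def MX2 : Matrix (Fin 3) (Fin 3) ℂ := !![0,0,0;0,0,1;0,-1,0]
def MX3 : Matrix (Fin 3) (Fin 3) ℂ := !![0,0,1;0,0,0;-1,0,0]
def MY : Matrix (Fin 3) (Fin 3) ℂ := !![0,0,1;0,-1,0;1,0,0]

set_option maxHeartbeats 1200000 in
lemma isDecomposable_of_cond {p q : ℝ} (hq : 0 ≤ q) (h1 : 0 ≤ 5 * p + 3 * q)
    (h2 : 5 * p + 3 * q ≤ 5) (h3 : 5 * p + 9 * q ≤ 10) : IsDecomposable (Nmap p q) := by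
  rcases le_total (3 * q) (5 * p) with hc | hc
  · -- 5p ≥ 3q : combination of id, Φ₂ (CP) and the vertex (1/2, 5/6) (coCP)
    refine ⟨thetaM ((((5 - 5*p - 3*q)/5 : ℝ) : ℂ) • outerC (vb MU)
        + (((5*p - 3*q)/10 : ℝ) : ℂ) • (outerC (vb MW1) + outerC (vb MW2) + outerC (vb MW3))),
      transLM (thetaM ((((3*q/5 : ℝ)) : ℂ) • (outerC (vb MX1) + outerC (vb MX2) + outerC (vb MX3)))),
      ?_, ?_, ?_⟩
    · unfold IsCP
      rw [choi_thetaM]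
      exact (posSemidef_ofReal_smul (by linarith) (outerC_posSemidef _)).add
        (posSemidef_ofReal_smul (by linarith)
          (((outerC_posSemidef _).add (outerC_posSemidef _)).add (outerC_posSemidef _)))
    · unfold IsCoCP IsCP
      have : (fun X => (transLM (thetaM ((((3*q/5 : ℝ)) : ℂ) • (outerC (vb MX1) + outerC (vb MX2) + outerC (vb MX3))))) Xᵀ)
          = ⇑(thetaM ((((3*q/5 : ℝ)) : ℂ) • (outerC (vb MX1) + outerC (vb MX2) + outerC (vb MX3)))) := by
        funext X
        simp [transLM, Matrix.transpose_transpose]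
      rw [this, choi_thetaM]
      exact posSemidef_ofReal_smul (by linarith)
        (((outerC_posSemidef _).add (outerC_posSemidef _)).add (outerC_posSemidef _))
    · intro X
      ext a b
      simp only [Nmap, Phi2, Phi4, thetaM, transLM, LinearMap.coe_mk, AddHom.coe_mk,
        Matrix.of_apply, Matrix.add_apply, Matrix.smul_apply, smul_eq_mul,
        Fin.sum_univ_three, outerC, vb, MU, MW1, MW2, MW3, MX1, MX2, MX3, MY,
        Matrix.transpose_apply]
      fin_cases a <;> fin_cases b <;>
        · simp [Matrix.vecHead, Matrix.vecTail]
          push_cast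
          ring
  · -- 5p ≤ 3q : combination of id (CP) and the vertices (1/2, 5/6), (-1, 5/3) (coCP)
    refine ⟨thetaM ((((10 - 5*p - 9*q)/10 : ℝ) : ℂ) • outerC (vb MU)),
      transLM (thetaM ((((5*p + 3*q)/10 : ℝ) : ℂ) • (outerC (vb MX1) + outerC (vb MX2) + outerC (vb MX3))
        + (((3*q - 5*p)/10 : ℝ) : ℂ) • outerC (vb MY))),
      ?_, ?_, ?_⟩
    · unfold IsCP
      rw [choi_thetaM]
      exact posSemidef_ofReal_smul (by linarith) (outerC_posSemidef _)
    · unfold IsCoCP IsCP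
      have : (fun X => (transLM (thetaM ((((5*p + 3*q)/10 : ℝ) : ℂ) • (outerC (vb MX1) + outerC (vb MX2) + outerC (vb MX3))
            + (((3*q - 5*p)/10 : ℝ) : ℂ) • outerC (vb MY)))) Xᵀ)
          = ⇑(thetaM ((((5*p + 3*q)/10 : ℝ) : ℂ) • (outerC (vb MX1) + outerC (vb MX2) + outerC (vb MX3))
            + (((3*q - 5*p)/10 : ℝ) : ℂ) • outerC (vb MY))) := by
        funext X
        simp [transLM, Matrix.transpose_transpose]
      rw [this, choi_thetaM]
      exact (posSemidef_ofReal_smul (by linarith)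
        (((outerC_posSemidef _).add (outerC_posSemidef _)).add (outerC_posSemidef _))).add
        (posSemidef_ofReal_smul (by linarith) (outerC_posSemidef _))
    · intro X
      ext a b
      simp only [Nmap, Phi2, Phi4, thetaM, transLM, LinearMap.coe_mk, AddHom.coe_mk,
        Matrix.of_apply, Matrix.add_apply, Matrix.smul_apply, smul_eq_mul,
        Fin.sum_univ_three, outerC, vb, MU, MW1, MW2, MW3, MX1, MX2, MX3, MY,
        Matrix.transpose_apply]
      fin_cases a <;> fin_cases b <;>
        · simp [Matrix.vecHead, Matrix.vecTail]
          push_cast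
          ring

end Aux

set_option maxHeartbeats 2000000 in
/-- for `p, q ∈ ℝ`, the map `N_{p,q}` is positive iff
`q ≥ 0`, `0 ≤ 5p+3q ≤ 5` and `5p+9q ≤ 10`, iff `N_{p,q}` is decomposable. -/
theorem stmt_16 (p q : ℝ) :
    (IsPosMap (Nmap p q)
      ↔ (0 ≤ q ∧ (0 ≤ 5 * p + 3 * q ∧ 5 * p + 3 * q ≤ 5) ∧ 5 * p + 9 * q ≤ 10)) ∧
    (IsDecomposable (Nmap p q)
      ↔ (0 ≤ q ∧ (0 ≤ 5 * p + 3 * q ∧ 5 * p + 3 * q ≤ 5) ∧ 5 * p + 9 * q ≤ 10)) := by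
  have himp : IsPosMap (Nmap p q) →
      (0 ≤ q ∧ (0 ≤ 5 * p + 3 * q ∧ 5 * p + 3 * q ≤ 5) ∧ 5 * p + 9 * q ≤ 10) := by
    intro hpos
    -- test matrix E₂₂
    have hE : (!![0,0,0;0,0,0;0,0,1] : Matrix (Fin 3) (Fin 3) ℂ).PosSemidef := by
      have h : (!![0,0,0;0,0,0;0,0,1] : Matrix (Fin 3) (Fin 3) ℂ)
          = (!![0,0,1] : Matrix (Fin 1) (Fin 3) ℂ)ᴴ * (!![0,0,1] : Matrix (Fin 1) (Fin 3) ℂ) := by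
        ext i j
        fin_cases i <;> fin_cases j <;>
          simp [Matrix.mul_apply, Fin.sum_univ_one, Matrix.vecHead, Matrix.vecTail]
      rw [h]
      exact Matrix.posSemidef_conjTranspose_mul_self _
    have hN := hpos _ hE
    have diag : ∀ (x : Fin 3 → ℂ) (r : ℝ),
        star x ⬝ᵥ (Nmap p q !![0,0,0;0,0,0;0,0,1]) *ᵥ x = ((r : ℝ) : ℂ) → 0 ≤ r := by
      intro x r hx
      have := hN.dotProduct_mulVec_nonneg x
      rw [hx] at this
      exact Complex.zero_le_real.mp this
    have hq0 : 0 ≤ 3 * q / 5 := by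
      refine diag ![1,0,0] _ ?_
      simp [dotProduct, Matrix.mulVec, Fin.sum_univ_three, Nmap, Phi2, Phi4]
      push_cast
      ring
    have hb0 : 0 ≤ p / 2 + 3 * q / 10 := by
      refine diag ![0,1,0] _ ?_
      simp [dotProduct, Matrix.mulVec, Fin.sum_univ_three, Nmap, Phi2, Phi4]
      push_cast
      ring
    have ha0 : 0 ≤ 1 - p / 2 - 9 * q / 10 := by
      refine diag ![0,0,1] _ ?_
      simp [dotProduct, Matrix.mulVec, Fin.sum_univ_three, Nmap, Phi2, Phi4]
      push_cast
      ring
    have hq' : 0 ≤ q := by linarith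
    refine ⟨hq', ⟨by linarith, ?_⟩, by linarith⟩
    -- the remaining inequality 5p + 3q ≤ 5
    by_contra hcon
    push_neg at hcon
    have hαneg : 1 - p - 3 * q / 5 < 0 := by linarith
    set α := 1 - p - 3 * q / 5 with hαdef
    set s := (2 * |p| + 3 * q / 5 + 1) / (-α) + 1 with hsdef
    have hs1 : 1 ≤ s := by
      have h0 : 0 ≤ (2 * |p| + 3 * q / 5 + 1) / (-α) :=
        div_nonneg (by nlinarith [abs_nonneg p]) (by linarith)
      rw [hsdef]
      linarith
    have hs0 : (0:ℝ) ≤ s := by linarith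
    set t := Real.sqrt s with htdef
    have ht : t ^ 2 = s := Real.sq_sqrt hs0
    have htc : ((t : ℂ)) ^ 2 = ((s : ℝ) : ℂ) := by
      rw [← Complex.ofReal_pow, ht]
    have hXpsd : (!![1, (t:ℂ), 0; (t:ℂ), ((s : ℝ):ℂ), 0; 0, 0, 0]
        : Matrix (Fin 3) (Fin 3) ℂ).PosSemidef := by
      have h : (!![1, (t:ℂ), 0; (t:ℂ), ((s : ℝ):ℂ), 0; 0, 0, 0] : Matrix (Fin 3) (Fin 3) ℂ)
          = (!![1, (t:ℂ), 0] : Matrix (Fin 1) (Fin 3) ℂ)ᴴ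
            * (!![1, (t:ℂ), 0] : Matrix (Fin 1) (Fin 3) ℂ) := by
        ext i j
        fin_cases i <;> fin_cases j <;>
          simp [Matrix.mul_apply, Fin.sum_univ_one, Matrix.vecHead, Matrix.vecTail,
            Complex.conj_ofReal, ← htc, sq]
      rw [h]
      exact Matrix.posSemidef_conjTranspose_mul_self _
    have hNX := hpos _ hXpsd
    have hval : (0:ℂ) ≤ ((α * s ^ 2 + 2 * p * s + 3 * q / 5 : ℝ) : ℂ) := by
      have h2 := hNX.dotProduct_mulVec_nonneg ![0, (t:ℂ), 1]
      have e : star ![0, (t:ℂ), 1] ⬝ᵥ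
          (Nmap p q !![1, (t:ℂ), 0; (t:ℂ), ((s : ℝ):ℂ), 0; 0, 0, 0]) *ᵥ ![0, (t:ℂ), 1]
          = ((α * s ^ 2 + 2 * p * s + 3 * q / 5 : ℝ) : ℂ) := by
        simp [dotProduct, Matrix.mulVec, Fin.sum_univ_three, Nmap, Phi2, Phi4,
          Complex.conj_ofReal, hαdef, Matrix.vecHead, Matrix.vecTail]
        push_cast
        rw [← htc]
        ring
      rw [e] at h2
      exact h2
    have hval' : 0 ≤ α * s ^ 2 + 2 * p * s + 3 * q / 5 := Complex.zero_le_real.mp hval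
    have hprod : (-α) * (s - 1) = 2 * |p| + 3 * q / 5 + 1 := by
      have hne : -α ≠ 0 := ne_of_gt (by linarith)
      have hs' : s - 1 = (2 * |p| + 3 * q / 5 + 1) / (-α) := by rw [hsdef]; ring
      rw [hs', mul_div_cancel₀ _ hne]
    have e1 : (-α) * (s - 1) * s = (2 * |p| + 3 * q / 5 + 1) * s := by rw [hprod]
    nlinarith [e1, hprod, hval', hs1, hs0, le_abs_self p, neg_abs_le p, hq',
      mul_nonneg (sub_nonneg.2 (le_abs_self p)) hs0,
      mul_nonneg hq' (sub_nonneg.2 hs1)]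
  refine ⟨⟨himp, fun hc => isPosMap_of_decomposable _
      (isDecomposable_of_cond hc.1 hc.2.1.1 hc.2.1.2 hc.2.2)⟩,
    ⟨fun hd => himp (isPosMap_of_decomposable _ hd),
      fun hc => isDecomposable_of_cond hc.1 hc.2.1.1 hc.2.1.2 hc.2.2⟩⟩

end
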